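/- arXiv:1710.07792 — 2 statements merged into one kernel-verified Lean document; each statement's English description precedes it below -/
import Mathlib

section
/- Let H be a complex Hilbert space, let p ≥ 1, and let A₁,…,A_p be bounded linear operators on H. Let 𝒜 be the companion operator on the p-fold Hilbert-space product H^p defined by 𝒜(x₁,…,x_p) = (A₁x₁ + A₂x₂ + ⋯ + A_p x_p, x₁, x₂, …, x_{p−1}). Then for every z ∈ ℂ, the operator I_{H^p} − z·𝒜 is invertible in the Banach algebra of bounded operators on H^p if and only if the operator pencil A(z) = I_H − z·A₁ − z²·A₂ − ⋯ − z^p·A_p is invertible in the Banach algebra of bounded operators on H. -/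
/-!
Solving `(I - z𝒜) x = y` coordinatewise, the last `p - 1` equations say
`x_{j+1} = z x_j + y_{j+1}`, so every coordinate is determined by `x₁`: `x_i = z^{i-1} x₁ + c_i(y)`
with `c(y)` depending only on `y`. Substituting into the first equation leaves
`A(z) x₁ = y₁ + z Σ Aᵢ cᵢ(y)`. Hence solutions of `(I - z𝒜) x = y` correspond bijectively to
solutions of one pencil equation whose right-hand side ranges over all of `H`, so the two operators
are bijective together; by the open mapping theorem, bijective means invertible.
-/

open Function

theorem Fin.succ_sub_one {n : ℕ} (j : Fin n) : j.succ - 1 = j.castSucc := by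
  rw [← Fin.coeSucc_eq_succ, add_sub_cancel_right]

theorem Function.bijective_iff_of_forall_eq_iff {X Y U V : Type*} {T : X → Y} {S : U → V}
    {w : Y → V} (hw : Surjective w) {lift : U → Y → X} (hlift : ∀ y, Injective (lift · y))
    (hT : ∀ x y, T x = y ↔ ∃ u, S u = w y ∧ lift u y = x) :
    Bijective T ↔ Bijective S := by
  refine ⟨fun ⟨hTi, hTs⟩ => ⟨fun u u' h => ?_, fun v => ?_⟩, fun ⟨hSi, hSs⟩ => ⟨?_, fun y => ?_⟩⟩
  · obtain ⟨y, hy⟩ := hw (S u)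
    exact hlift y <| hTi <| ((hT _ y).2 ⟨u, hy.symm, rfl⟩).trans
      ((hT _ y).2 ⟨u', h.symm.trans hy.symm, rfl⟩).symm
  · obtain ⟨y, rfl⟩ := hw v
    obtain ⟨x, hx⟩ := hTs y
    obtain ⟨u, hu, -⟩ := (hT x y).1 hx
    exact ⟨u, hu⟩
  · intro x x' h
    obtain ⟨u, hu, hx⟩ := (hT x _).1 rfl
    obtain ⟨u', hu', hx'⟩ := (hT x' _).1 h.symm
    rw [← hx, ← hx', hSi (hu.trans hu'.symm)]
  · obtain ⟨u, hu⟩ := hSs (w y)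
    exact ⟨lift u y, (hT _ y).2 ⟨u, hu, rfl⟩⟩

section FirstOrderRec

variable {R M : Type*} [Semiring R] [AddCommMonoid M] [Module R M] {n : ℕ}

def firstOrderRec (z : R) (u : M) (y : Fin (n + 1) → M) : Fin (n + 1) → M :=
  Fin.induction u fun j xj => z • xj + y j.succ

variable (z : R) (u : M) (y : Fin (n + 1) → M)

@[simp]
theorem firstOrderRec_zero : firstOrderRec z u y 0 = u :=
  Fin.induction_zero ..

@[simp]
theorem firstOrderRec_succ (j : Fin n) :
    firstOrderRec z u y j.succ = z • firstOrderRec z u y j.castSucc + y j.succ :=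
  Fin.induction_succ ..

theorem firstOrderRec_injective : Injective (firstOrderRec z · y) := fun u u' h => by
  simpa using congrFun h 0

theorem eq_firstOrderRec {x : Fin (n + 1) → M}
    (hx : ∀ j : Fin n, x j.succ = z • x j.castSucc + y j.succ) :
    x = firstOrderRec z (x 0) y := by
  funext i
  induction i using Fin.induction with
  | zero => simp
  | succ j ih => rw [hx, ih, firstOrderRec_succ]

theorem firstOrderRec_eq_pow_smul_add (i : Fin (n + 1)) :
    firstOrderRec z u y i = z ^ (i : ℕ) • u + firstOrderRec z 0 y i := by
  induction i using Fin.induction with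
  | zero => simp
  | succ j ih => simp [ih, smul_add, smul_smul, pow_succ', add_assoc]

theorem firstOrderRec_zero_pi_single (v : M) :
    firstOrderRec z 0 (Pi.single (0 : Fin (n + 1)) v) = 0 := by
  funext i
  induction i using Fin.induction with
  | zero => simp
  | succ j ih => simp [ih, Fin.succ_ne_zero]

end FirstOrderRec

section Companion

variable {R M F : Type*} [CommRing R] [AddCommGroup M] [Module R M] [FunLike F M M]
  [LinearMapClass F R M M] {n : ℕ} (A : Fin (n + 1) → F) (z : R)

def pencil (u : M) : M := u - ∑ i, z ^ (i.val + 1) • A i u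

/-- The right-hand side of the pencil equation that `(I - z𝒜) x = y` reduces to. -/
def companionRhs (y : Fin (n + 1) → M) : M := y 0 + z • ∑ i, A i (firstOrderRec z 0 y i)

theorem companionRhs_surjective : Surjective (companionRhs (M := M) A z) := fun v =>
  ⟨Pi.single 0 v, by simp [companionRhs, firstOrderRec_zero_pi_single]⟩

theorem sub_smul_sum_firstOrderRec (u : M) (y : Fin (n + 1) → M) :
    u - z • ∑ i, A i (firstOrderRec z u y i) =
      pencil A z u - z • ∑ i, A i (firstOrderRec z 0 y i) := by
  simp only [firstOrderRec_eq_pow_smul_add z u, map_add, map_smul, Finset.sum_add_distrib,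
    smul_add, Finset.smul_sum, smul_smul, ← pow_succ', pencil]
  abel

theorem eq_iff_pencil_eq {T : (Fin (n + 1) → M) → Fin (n + 1) → M}
    (hT0 : ∀ x, T x 0 = x 0 - z • ∑ i, A i (x i))
    (hTs : ∀ x (j : Fin n), T x j.succ = x j.succ - z • x j.castSucc) (x y : Fin (n + 1) → M) :
    T x = y ↔ ∃ u, pencil A z u = companionRhs A z y ∧ firstOrderRec z u y = x := by
  constructor
  · rintro rfl
    have hx : x = firstOrderRec z (x 0) (T x) :=
      eq_firstOrderRec z _ fun j => by rw [hTs, add_sub_cancel]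
    refine ⟨x 0, ?_, hx.symm⟩
    rw [companionRhs, ← sub_eq_iff_eq_add, ← sub_smul_sum_firstOrderRec, ← hx, hT0]
  · rintro ⟨u, hu, rfl⟩
    funext i
    cases i using Fin.cases with
    | zero => rw [hT0, firstOrderRec_zero, sub_smul_sum_firstOrderRec, hu, companionRhs,
        add_sub_cancel_right]
    | succ j => rw [hTs, firstOrderRec_succ, add_sub_cancel_left]

end Companion

/-- For bounded operators `A₁,…,A_p` on a complex Hilbert space `H` and the companion
operator `𝒜` on `H^p` (with `𝒜(x₁,…,x_p) = (Σᵢ Aᵢ xᵢ, x₁, …, x_{p-1})`), the operator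
`I - z𝒜` is invertible on `H^p` iff the pencil `A(z) = I - zA₁ - ⋯ - z^p A_p` is
invertible on `H`. -/
theorem stmt_3 {H : Type*} [NormedAddCommGroup H] [InnerProductSpace ℂ H]
    [CompleteSpace H] {p : ℕ} [NeZero p] (A : Fin p → H →L[ℂ] H)
    (𝒜 : PiLp 2 (fun _ : Fin p => H) →L[ℂ] PiLp 2 (fun _ : Fin p => H))
    (h𝒜0 : ∀ x : PiLp 2 (fun _ : Fin p => H), 𝒜 x 0 = ∑ i : Fin p, A i (x i))
    (h𝒜s : ∀ (x : PiLp 2 (fun _ : Fin p => H)) (i : Fin p), i ≠ 0 → 𝒜 x i = x (i - 1))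
    (z : ℂ) :
    IsUnit ((1 : PiLp 2 (fun _ : Fin p => H) →L[ℂ] PiLp 2 (fun _ : Fin p => H)) - z • 𝒜) ↔
      IsUnit ((1 : H →L[ℂ] H) - ∑ i : Fin p, z ^ (i.val + 1) • A i) := by
  obtain ⟨n, rfl⟩ : ∃ n, p = n + 1 := ⟨p - 1, (Nat.sub_add_cancel NeZero.one_le).symm⟩
  let e := WithLp.equiv 2 (Fin (n + 1) → H)
  let T := e ∘ ⇑(1 - z • 𝒜) ∘ e.symm
  have hT0 : ∀ x, T x 0 = x 0 - z • ∑ i, A i (x i) := fun x => by simp [T, e, h𝒜0]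
  have hTs : ∀ x (j : Fin n), T x j.succ = x j.succ - z • x j.castSucc := fun x j => by
    simp [T, e, h𝒜s _ _ j.succ_ne_zero, Fin.succ_sub_one]
  have hpencil : ⇑((1 : H →L[ℂ] H) - ∑ i : Fin (n + 1), z ^ (i.val + 1) • A i) =
      pencil A z := by
    funext u
    simp [pencil]
  rw [ContinuousLinearMap.isUnit_iff_bijective, ContinuousLinearMap.isUnit_iff_bijective,
    hpencil, ← e.comp_bijective, ← e.symm.bijective_comp]
  exact bijective_iff_of_forall_eq_iff (companionRhs_surjective A z)
    (firstOrderRec_injective z) (eq_iff_pencil_eq A z hT0 hTs)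
end

section
/- Let H be a complex Hilbert space, Q a bounded idempotent operator on H with P = I − Q, and let G : ℂ → B(H) be continuous (in operator norm) on a neighborhood U of 1 with G(1) invertible. Suppose A(z) = (P + (1 − z)·Q) ∘ G(z) for all z ∈ U. Then there is a punctured neighborhood of 1 on which A(z) is invertible with inverse A(z)^{-1} = G(z)^{-1} ∘ (P + (1 − z)^{-1}·Q), and the limit lim_{z→1, z≠1} (1 − z)·A(z)^{-1} exists in operator norm and equals G(1)^{-1} ∘ Q. -/
open Filter
open scoped Topology

/-! Since `Q` is idempotent, `P + c • Q` is invertible with inverse `P + c⁻¹ • Q` for `c ≠ 0`,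
so near `1` the operator `A z` is a product of two units. Multiplying its inverse by `1 - z`
gives `G(z)⁻¹ ((1 - z) P + Q)`, which is continuous at `1` because inversion is continuous on
the units of the Banach algebra `B(H)`. -/

namespace IsIdempotentElem

variable {𝕜 R : Type*} [Ring R] {q : R}

theorem compl_add_smul_mul_compl_add_smul [CommRing 𝕜] [Algebra 𝕜 R] (hq : IsIdempotentElem q)
    (a b : 𝕜) : (1 - q + a • q) * (1 - q + b • q) = 1 - q + (a * b) • q := by
  have hq' : q * q = q := hq
  simp only [sub_mul, mul_sub, add_mul, mul_add, smul_mul_assoc, mul_smul_comm, smul_smul,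
    one_mul, mul_one, hq', sub_self, zero_add, mul_comm b a]
  abel

variable [Field 𝕜] [Algebra 𝕜 R]

def unitComplAddSMul (hq : IsIdempotentElem q) {c : 𝕜} (hc : c ≠ 0) : Rˣ where
  val := 1 - q + c • q
  inv := 1 - q + c⁻¹ • q
  val_inv := by rw [hq.compl_add_smul_mul_compl_add_smul, mul_inv_cancel₀ hc, one_smul,
    sub_add_cancel]
  inv_val := by rw [hq.compl_add_smul_mul_compl_add_smul, inv_mul_cancel₀ hc, one_smul,
    sub_add_cancel]

theorem isUnit_compl_add_smul (hq : IsIdempotentElem q) {c : 𝕜} (hc : c ≠ 0) :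
    IsUnit (1 - q + c • q) :=
  (hq.unitComplAddSMul hc).isUnit

theorem ringInverse_compl_add_smul (hq : IsIdempotentElem q) {c : 𝕜} (hc : c ≠ 0) :
    Ring.inverse (1 - q + c • q) = 1 - q + c⁻¹ • q :=
  Ring.inverse_unit (hq.unitComplAddSMul hc)

end IsIdempotentElem

theorem tendsto_sub_smul_mul_add_inv_smul {𝕜 R : Type*} [NontriviallyNormedField 𝕜] [NormedRing R]
    [NormedAlgebra 𝕜 R] {x : 𝕜 → R} (hx : ContinuousAt x 1) (p q : R) :
    Tendsto (fun z => (1 - z) • (x z * (p + (1 - z)⁻¹ • q))) (𝓝[≠] 1) (𝓝 (x 1 * q)) := by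
  have hcont : ContinuousAt (fun z => x z * ((1 - z) • p + q)) 1 := by fun_prop
  have hlim : Tendsto (fun z => x z * ((1 - z) • p + q)) (𝓝[≠] 1) (𝓝 (x 1 * q)) := by
    simpa using hcont.tendsto.mono_left (nhdsWithin_le_nhds (s := {1}ᶜ))
  refine hlim.congr' ?_
  filter_upwards [self_mem_nhdsWithin] with z hz
  have hz' : 1 - z ≠ 0 := sub_ne_zero.mpr (Ne.symm hz)
  rw [← mul_smul_comm, smul_add, smul_smul, mul_inv_cancel₀ hz', one_smul]

/-- If `A(z) = (P + (1 - z)Q) ∘ G(z)` on a neighborhood `U` of `1`, with `Q` a bounded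
idempotent, `P = I - Q`, `G` continuous on `U` and `G(1)` invertible, then on a punctured
neighborhood of `1` the operator `A(z)` is invertible with
`A(z)⁻¹ = G(z)⁻¹ ∘ (P + (1-z)⁻¹ Q)` and `(1 - z)·A(z)⁻¹ → G(1)⁻¹ ∘ Q` as `z → 1`. -/
theorem stmt_9 {H : Type*} [NormedAddCommGroup H] [InnerProductSpace ℂ H]
    [CompleteSpace H] (Q : H →L[ℂ] H) (hQ : Q ∘L Q = Q)
    (P : H →L[ℂ] H) (hP : P = 1 - Q) (G A : ℂ → H →L[ℂ] H)
    (U : Set ℂ) (hU : U ∈ 𝓝 (1 : ℂ)) (hGc : ContinuousOn G U)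
    (hG1 : IsUnit (G 1)) (hA : ∀ z ∈ U, A z = (P + (1 - z) • Q) ∘L G z) :
    (∀ᶠ z in 𝓝[≠] (1 : ℂ),
        IsUnit (A z) ∧
          Ring.inverse (A z) = Ring.inverse (G z) ∘L (P + (1 - z)⁻¹ • Q)) ∧
      Tendsto (fun z : ℂ => (1 - z) • Ring.inverse (A z)) (𝓝[≠] (1 : ℂ))
        (𝓝 (Ring.inverse (G 1) ∘L Q)) := by
  subst hP
  have hQ' : IsIdempotentElem Q := hQ
  have hGc1 : ContinuousAt G 1 := hGc.continuousAt hU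
  have hGunit : ∀ᶠ z in 𝓝 (1 : ℂ), IsUnit (G z) :=
    hGc1.preimage_mem_nhds (Units.isOpen.mem_nhds hG1)
  have hinv : ContinuousAt (fun z => Ring.inverse (G z)) 1 := by
    have := NormedRing.inverse_continuousAt hG1.unit
    rw [hG1.unit_spec] at this
    exact this.comp hGc1
  have hA_inv : ∀ᶠ z in 𝓝[≠] (1 : ℂ),
      IsUnit (A z) ∧ Ring.inverse (A z) = Ring.inverse (G z) * (1 - Q + (1 - z)⁻¹ • Q) := by
    filter_upwards [nhdsWithin_le_nhds hU, nhdsWithin_le_nhds hGunit, self_mem_nhdsWithin]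
      with z hzU hGz hz
    have hz' : 1 - z ≠ 0 := sub_ne_zero.mpr (Ne.symm hz)
    rw [hA z hzU, ← ContinuousLinearMap.mul_def]
    exact ⟨(hQ'.isUnit_compl_add_smul hz').mul hGz, by
      rw [Ring.inverse_mul (.inl (hQ'.isUnit_compl_add_smul hz')),
        hQ'.ringInverse_compl_add_smul hz']⟩
  refine ⟨hA_inv, (tendsto_sub_smul_mul_add_inv_smul hinv (1 - Q) Q).congr' ?_⟩
  filter_upwards [hA_inv] with z hz
  rw [hz.2]
end
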